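/- Let f be sampled from a probability measure on homomorphism height functions on Z^d that is invariant under translations by a full-rank sublattice L of Z^d. Then almost surely, lim_{n→∞} sup_{||v||_1 = n} |f(v)|/n = 0. -/

import Mathlib

open MeasureTheory Filter
open scoped ENNReal Classical

noncomputable section

def norm1 {d : ℕ} (v : Fin d → ℤ) : ℤ := ∑ i, |v i|

def Adj {d : ℕ} (u v : Fin d → ℤ) : Prop := norm1 (u - v) = 1

def IsHHF {d : ℕ} (f : (Fin d → ℤ) → ℤ) : Prop :=
  (∀ u v, Adj u v → |f u - f v| = 1) ∧ ∀ v, f v % 2 = norm1 v % 2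

def IsHHFOn {d : ℕ} (S : Set (Fin d → ℤ)) (f : (Fin d → ℤ) → ℤ) : Prop :=
  (∀ u ∈ S, ∀ w ∈ S, Adj u w → |f u - f w| = 1) ∧ ∀ u ∈ S, f u % 2 = norm1 u % 2

def connIn {d : ℕ} (S : Set (Fin d → ℤ)) (a b : Fin d → ℤ) : Prop :=
  Relation.ReflTransGen (fun x y => x ∈ S ∧ y ∈ S ∧ Adj x y) a b

namespace Stmt14Aux

variable {d : ℕ}

lemma norm1_nonneg (v : Fin d → ℤ) : 0 ≤ norm1 v :=
  Finset.sum_nonneg fun i _ => abs_nonneg _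

lemma abs_le_norm1 (v : Fin d → ℤ) (i : Fin d) : |v i| ≤ norm1 v :=
  Finset.single_le_sum (fun j _ => abs_nonneg (v j)) (Finset.mem_univ i)

lemma norm1_eq_zero {v : Fin d → ℤ} (h : norm1 v = 0) : v = 0 := by
  funext i
  have h1 : |v i| ≤ 0 := h ▸ abs_le_norm1 v i
  have := abs_nonneg (v i)
  simpa using abs_eq_zero.mp (le_antisymm h1 this)

lemma norm1_update (x : Fin d → ℤ) (i : Fin d) (hx : x i ≠ 0) :
    norm1 (Function.update x i (x i - Int.sign (x i))) = norm1 x - 1 := by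
  unfold norm1
  have hfun : (fun j => |Function.update x i (x i - Int.sign (x i)) j|)
      = Function.update (fun j => |x j|) i |x i - Int.sign (x i)| := by
    funext j
    by_cases hj : j = i
    · subst hj; simp
    · simp [Function.update_of_ne hj]
  simp only [hfun]
  rw [Finset.sum_update_of_mem (Finset.mem_univ i)]
  have : ∑ j ∈ Finset.univ \ {i}, |x j| = (∑ j, |x j|) - |x i| := by
    rw [eq_sub_iff_add_eq]
    rw [Finset.sum_sdiff_eq_sub (Finset.subset_univ {i})]
    simp [Finset.sum_singleton]
  rw [this]
  have habs : |x i - Int.sign (x i)| = |x i| - 1 := by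
    rcases lt_trichotomy (x i) 0 with h | h | h
    · rw [Int.sign_eq_neg_one_of_neg h]; rw [abs_of_neg h, abs_of_nonpos (by omega)]; ring
    · exact absurd h hx
    · rw [Int.sign_eq_one_of_pos h]; rw [abs_of_pos h, abs_of_nonneg (by omega)]
  omega

lemma norm1_sub_update (x : Fin d → ℤ) (i : Fin d) :
    norm1 (x - Function.update x i (x i - Int.sign (x i))) = |Int.sign (x i)| := by
  unfold norm1
  rw [Finset.sum_eq_single i]
  · simp [Function.update_self]
  · intro j _ hj
    simp [Function.update_of_ne hj]
  · simp

lemma lipschitz {f : (Fin d → ℤ) → ℤ} (hf : ∀ u v, Adj u v → |f u - f v| = 1) :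
    ∀ (n : ℕ) (u v : Fin d → ℤ), norm1 (u - v) = n → |f u - f v| ≤ n := by
  intro n
  induction n with
  | zero =>
    intro u v h
    have : u - v = 0 := norm1_eq_zero (by simpa using h)
    have : u = v := by rwa [sub_eq_zero] at this
    simp [this]
  | succ n ih =>
    intro u v h
    set x := u - v with hxdef
    have hx0 : x ≠ 0 := by
      intro h0
      rw [h0] at h
      have : norm1 (0 : Fin d → ℤ) = 0 := by unfold norm1; simp
      omega
    have : ∃ i, x i ≠ 0 := by
      by_contra hc
      push_neg at hc
      exact hx0 (funext fun i => hc i)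
    obtain ⟨i, hi⟩ := this
    set x' := Function.update x i (x i - Int.sign (x i)) with hx'
    set u' := v + x' with hu'
    have hux : u' - v = x' := by simp [hu']
    have h1 : norm1 (u' - v) = n := by
      rw [hux, hx', norm1_update x i hi, h]; push_cast; ring
    have h2 : Adj u u' := by
      unfold Adj
      have : u - u' = x - x' := by
        funext j; simp [hu', hxdef]; ring
      rw [this, hx', norm1_sub_update]
      rcases lt_trichotomy (x i) 0 with hh | hh | hh
      · simp [Int.sign_eq_neg_one_of_neg hh]
      · exact absurd hh hi
      · simp [Int.sign_eq_one_of_pos hh]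
    have h3 := hf u u' h2
    have h4 := ih u' v h1
    have := abs_sub_abs_le_abs_sub (f u - f v) (f u' - f v)
    have htri : |f u - f v| ≤ |f u - f u'| + |f u' - f v| := by
      have : f u - f v = (f u - f u') + (f u' - f v) := by ring
      rw [this]; exact abs_add_le _ _
    push_cast
    omega


/-- The discrete box (`ℓ∞` ball) of radius `r` around `c`. -/
def box (c : Fin d → ℤ) (r : ℤ) : Finset (Fin d → ℤ) :=
  Finset.Icc (fun j => c j - r) (fun j => c j + r)

lemma mem_box {c u : Fin d → ℤ} {r : ℤ} : u ∈ box c r ↔ ∀ i, |u i - c i| ≤ r := by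
  unfold box
  rw [Finset.mem_Icc]
  constructor
  · rintro ⟨h1, h2⟩ i
    have ha : c i - r ≤ u i := h1 i
    have hb : u i ≤ c i + r := h2 i
    rw [abs_le]
    omega
  · intro h
    constructor
    · intro i
      have hab := abs_le.mp (h i)
      show c i - r ≤ u i
      omega
    · intro i
      have hab := abs_le.mp (h i)
      show u i ≤ c i + r
      omega

lemma card_box (c : Fin d → ℤ) (r : ℤ) : (box c r).card = ((2 * r + 1).toNat) ^ d := by
  unfold box
  rw [Pi.card_Icc]
  have : ∀ i : Fin d, (Finset.Icc (c i - r) (c i + r)).card = (2 * r + 1).toNat := by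
    intro i
    rw [Int.card_Icc]
    congr 1
    ring
  rw [Finset.prod_congr rfl (fun i _ => this i), Finset.prod_const, Finset.card_univ,
    Fintype.card_fin]

lemma self_mem_box (c : Fin d → ℤ) {r : ℤ} (hr : 0 ≤ r) : c ∈ box c r := by
  rw [mem_box]; intro i; simpa using hr

/-- Greedy Vitali-type selection for finite families of boxes. -/
lemma vitali_select (c : (Fin d → ℤ) → (Fin d → ℤ)) (r : (Fin d → ℤ) → ℤ) :
    ∀ (n : ℕ) (F : Finset (Fin d → ℤ)), F.card ≤ n → (∀ w ∈ F, 1 ≤ r w) →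
    ∃ S ⊆ F,
      ((S : Set (Fin d → ℤ)).PairwiseDisjoint (fun s => box (c s) (r s))) ∧
      ∀ w ∈ F, ∃ s ∈ S, r w ≤ r s ∧ ¬ Disjoint (box (c w) (r w)) (box (c s) (r s)) := by
  intro n
  induction n with
  | zero =>
    intro F hF _
    have : F = ∅ := Finset.card_eq_zero.mp (Nat.le_zero.mp hF)
    subst this
    exact ⟨∅, Finset.Subset.refl _, by intro a ha; simp at ha, by intro w hw; simp at hw⟩
  | succ n ih =>
    intro F hF hr
    rcases F.eq_empty_or_nonempty with hFe | hFne
    · subst hFe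
      exact ⟨∅, Finset.Subset.refl _, by intro a ha; simp at ha, by intro w hw; simp at hw⟩
    obtain ⟨j₀, hj₀F, hj₀max⟩ := F.exists_max_image r hFne
    set F' := F.filter (fun w => Disjoint (box (c w) (r w)) (box (c j₀) (r j₀))) with hF'
    have hj₀box : ¬ Disjoint (box (c j₀) (r j₀)) (box (c j₀) (r j₀)) := by
      intro hdis
      have hmem := self_mem_box (c j₀) (by linarith [hr j₀ hj₀F] : (0:ℤ) ≤ r j₀)
      exact (Finset.disjoint_left.mp hdis hmem) hmem
    have hj₀notF' : j₀ ∉ F' := by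
      rw [hF', Finset.mem_filter]
      rintro ⟨_, hdis⟩
      exact hj₀box hdis
    have hF'sub : F' ⊆ F := Finset.filter_subset _ _
    have hcard : F'.card ≤ n := by
      have h1 : F' ⊆ F.erase j₀ := fun w hw =>
        Finset.mem_erase.mpr ⟨fun he => hj₀notF' (he ▸ hw), hF'sub hw⟩
      have := Finset.card_le_card h1
      have := Finset.card_erase_of_mem hj₀F
      omega
    obtain ⟨S', hS'sub, hS'dis, hS'cov⟩ := ih F' hcard (fun w hw => hr w (hF'sub hw))
    refine ⟨insert j₀ S', ?_, ?_, ?_⟩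
    · intro w hw
      rcases Finset.mem_insert.mp hw with h | h
      · exact h ▸ hj₀F
      · exact hF'sub (hS'sub h)
    · intro a ha b hb hab
      simp only [Finset.coe_insert, Set.mem_insert_iff, Finset.mem_coe] at ha hb
      rcases ha with ha | ha <;> rcases hb with hb | hb
      · exact absurd (ha.trans hb.symm) hab
      · subst ha
        have := (Finset.mem_filter.mp (hS'sub hb)).2
        exact this.symm
      · subst hb
        exact (Finset.mem_filter.mp (hS'sub ha)).2
      · exact hS'dis ha hb hab
    · intro w hw
      by_cases hwF' : w ∈ F'
      · obtain ⟨s, hs, h1, h2⟩ := hS'cov w hwF'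
        exact ⟨s, Finset.mem_insert_of_mem hs, h1, h2⟩
      · refine ⟨j₀, Finset.mem_insert_self _ _, hj₀max w hw, ?_⟩
        intro hdis
        exact hwF' (Finset.mem_filter.mpr ⟨hw, hdis⟩)

lemma toNat_mul_of_nonneg {a b : ℤ} (ha : 0 ≤ a) (hb : 0 ≤ b) :
    (a * b).toNat = a.toNat * b.toNat := by
  rcases Int.eq_ofNat_of_zero_le ha with ⟨m, rfl⟩
  rcases Int.eq_ofNat_of_zero_le hb with ⟨p, rfl⟩
  simp only [← Int.natCast_mul, Int.toNat_natCast]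

/-- Vitali counting: if every point of `F` is `β r`-close to an all-`G` box of radius `r ≥ 1`,
then `F` is not much bigger than `G`. -/
lemma vitali_count (β : ℤ) (hβ : 1 ≤ β) (F G : Finset (Fin d → ℤ))
    (h : ∀ w ∈ F, ∃ c r, 1 ≤ r ∧ (∀ i, |w i - c i| ≤ β * r) ∧ box c r ⊆ G) :
    F.card ≤ ((2 * β + 5).toNat) ^ d * G.card := by
  -- choose witnesses
  have hchoice : ∀ w : Fin d → ℤ, ∃ c r, w ∈ F →
      (1 ≤ r ∧ (∀ i, |w i - c i| ≤ β * r) ∧ box c r ⊆ G) := by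
    intro w
    by_cases hw : w ∈ F
    · obtain ⟨c, r, h1, h2, h3⟩ := h w hw
      exact ⟨c, r, fun _ => ⟨h1, h2, h3⟩⟩
    · exact ⟨0, 1, fun hc => absurd hc hw⟩
  choose c r hcr using hchoice
  obtain ⟨S, hSF, hSdis, hScov⟩ := vitali_select c r F.card F le_rfl
    (fun w hw => (hcr w hw).1)
  -- every w in F lies in the enlarged box of its selected s
  have hcover : ∀ w ∈ F, ∃ s ∈ S, w ∈ box (c s) ((β + 2) * r s) := by
    intro w hw
    obtain ⟨s, hsS, hrle, hndis⟩ := hScov w hw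
    rw [Finset.not_disjoint_iff] at hndis
    obtain ⟨u, hu1, hu2⟩ := hndis
    refine ⟨s, hsS, ?_⟩
    rw [mem_box]
    intro i
    have e1 := (hcr w hw).2.1 i
    have e2 := (mem_box.mp hu1) i
    have e3 := (mem_box.mp hu2) i
    have hr1 : 1 ≤ r w := (hcr w hw).1
    have : |w i - c s i| ≤ |w i - c w i| + |c w i - u i| + |u i - c s i| := by
      have t1 : w i - c s i = (w i - c w i) + (c w i - u i) + (u i - c s i) := by ring
      rw [t1]
      calc |(w i - c w i) + (c w i - u i) + (u i - c s i)|
          ≤ |(w i - c w i) + (c w i - u i)| + |u i - c s i| := abs_add_le _ _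
        _ ≤ |w i - c w i| + |c w i - u i| + |u i - c s i| := by
            have := abs_add_le (w i - c w i) (c w i - u i)
            omega
    have e2' : |c w i - u i| ≤ r w := by rw [abs_sub_comm]; exact e2
    have hβr : β * r w ≤ β * r s := by
      apply mul_le_mul_of_nonneg_left hrle (by omega)
    nlinarith
  -- count
  have hsubset : F ⊆ S.biUnion (fun s => box (c s) ((β + 2) * r s)) := by
    intro w hw
    obtain ⟨s, hs, hmem⟩ := hcover w hw
    exact Finset.mem_biUnion.mpr ⟨s, hs, hmem⟩
  calc F.card ≤ (S.biUnion (fun s => box (c s) ((β + 2) * r s))).card :=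
        Finset.card_le_card hsubset
    _ ≤ ∑ s ∈ S, (box (c s) ((β + 2) * r s)).card := Finset.card_biUnion_le
    _ ≤ ∑ s ∈ S, ((2 * β + 5).toNat) ^ d * (box (c s) (r s)).card := by
        apply Finset.sum_le_sum
        intro s hs
        have hr1 : 1 ≤ r s := (hcr s (hSF hs)).1
        rw [card_box, card_box, ← Nat.mul_pow]
        apply Nat.pow_le_pow_left
        have h1 : (2 * ((β + 2) * r s) + 1) ≤ (2 * β + 5) * (2 * r s + 1) := by nlinarith
        calc (2 * ((β + 2) * r s) + 1).toNat ≤ ((2 * β + 5) * (2 * r s + 1)).toNat :=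
              Int.toNat_le_toNat h1
          _ = (2 * β + 5).toNat * (2 * r s + 1).toNat :=
              toNat_mul_of_nonneg (by omega) (by omega)
    _ = ((2 * β + 5).toNat) ^ d * ∑ s ∈ S, (box (c s) (r s)).card := by
        rw [Finset.mul_sum]
    _ = ((2 * β + 5).toNat) ^ d * (S.biUnion (fun s => box (c s) (r s))).card := by
        rw [Finset.card_biUnion]
        intro a ha b hb hab
        exact hSdis ha hb hab
    _ ≤ ((2 * β + 5).toNat) ^ d * G.card := by
        apply Nat.mul_le_mul_left
        apply Finset.card_le_card
        intro u hu
        obtain ⟨s, hs, hmem⟩ := Finset.mem_biUnion.mp hu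
        exact (hcr s (hSF hs)).2.2 hmem


lemma lipschitz' {f : (Fin d → ℤ) → ℤ} (hf : ∀ u v, Adj u v → |f u - f v| = 1) :
    ∀ u v, |f u - f v| ≤ norm1 (u - v) := by
  intro u v
  have h0 : 0 ≤ norm1 (u - v) := norm1_nonneg _
  have := lipschitz hf (norm1 (u - v)).toNat u v (by rw [Int.toNat_of_nonneg h0])
  rwa [Int.toNat_of_nonneg h0] at this

/-- If `f` is Lipschitz and `|f v|` is linearly large at `v`, then `f` is large
on a whole box around `v` of comparable scale. -/
lemma bad_gives_box (hd : 1 ≤ d) {k : ℕ} (hk : 1 ≤ k) (K : ℕ) {f : (Fin d → ℤ) → ℤ}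
    (hlip : ∀ u v, |f u - f v| ≤ norm1 (u - v)) (v : Fin d → ℤ)
    (hn : ((16 * d * k + 8 * k * (K + 1) : ℕ) : ℤ) ≤ norm1 v)
    (hbad : norm1 v < (k : ℤ) * |f v|) :
    ∃ h : ℤ, 1 ≤ h ∧ (∀ i, |v i| ≤ (16 * d * k : ℤ) * h) ∧
      ∀ u ∈ box v h, (K : ℤ) < |f u| := by
  set n : ℤ := norm1 v with hnd
  set D : ℤ := 8 * d * k with hD
  have hdk : (1 : ℤ) ≤ (d : ℤ) ∧ (1 : ℤ) ≤ (k : ℤ) := by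
    constructor <;> exact_mod_cast ‹_›
  obtain ⟨hd1, hk1⟩ := hdk
  have hDpos : 0 < D := by positivity
  have hnge : (16 * (d:ℤ) * k + 8 * k * ((K:ℤ) + 1)) ≤ n := by push_cast at hn ⊢; linarith
  have hDn : D ≤ n := by nlinarith
  set h : ℤ := n / D with hh
  have h1 : 1 ≤ h := by
    rw [hh, Int.le_ediv_iff_mul_le hDpos]
    linarith
  have hDh : D * h ≤ n := by
    rw [hh, mul_comm]
    exact Int.ediv_mul_le n (by positivity)
  have hlow : n < D * h + D := by
    have := Int.lt_ediv_add_one_mul_self n hDpos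
    rw [← hh] at this
    nlinarith
  refine ⟨h, h1, ?_, ?_⟩
  · intro i
    have hv : |v i| ≤ n := abs_le_norm1 v i
    have : n ≤ 16 * (d:ℤ) * k * h := by nlinarith
    linarith
  · intro u hu
    have hbox := mem_box.mp hu
    have hnorm : norm1 (v - u) ≤ (d : ℤ) * h := by
      unfold norm1
      calc ∑ i, |(v - u) i| ≤ ∑ _i : Fin d, h := by
            apply Finset.sum_le_sum
            intro i _
            have := hbox i
            simp only [Pi.sub_apply]
            rw [abs_sub_comm] at this
            exact this
        _ = (d : ℤ) * h := by
            rw [Finset.sum_const, Finset.card_univ, Fintype.card_fin, nsmul_eq_mul]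
    have habs : |f v| - |f u| ≤ norm1 (v - u) :=
      le_trans (abs_sub_abs_le_abs_sub (f v) (f u)) (hlip v u)
    have hfu : |f v| - (d : ℤ) * h ≤ |f u| := by linarith
    -- k * |f u| ≥ n + 1 - k * d * h, and 8 * k * d * h ≤ n
    have h8 : 8 * ((k:ℤ) * d * h) ≤ n := by nlinarith
    have hkfu : (k:ℤ) * |f u| ≥ n + 1 - (k:ℤ) * ((d:ℤ) * h) := by nlinarith
    have hnK : 8 * (k:ℤ) * ((K:ℤ) + 1) ≤ n := by linarith
    have : (k:ℤ) * ((K:ℤ) + 1) < (k:ℤ) * |f u| := by nlinarith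
    have := lt_of_mul_lt_mul_left (by linarith : (k:ℤ) * ((K:ℤ)+1) < (k:ℤ) * |f u|)
      (by linarith : (0:ℤ) ≤ (k:ℤ))
    linarith

section Measures

/-- The event that `f` is large at `u`. -/
def bigSet (d : ℕ) (K : ℤ) (u : Fin d → ℤ) : Set ((Fin d → ℤ) → ℤ) := {f | K < |f u|}

lemma measurableSet_bigSet (K : ℤ) (u : Fin d → ℤ) : MeasurableSet (bigSet d K u) := by
  have : bigSet d K u = (fun f : (Fin d → ℤ) → ℤ => f u) ⁻¹' {x | K < |x|} := rfl
  rw [this]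
  exact (measurable_pi_apply u) MeasurableSet.of_discrete

/-- The event that `f` is `> K` on some box of radius `1 ≤ r ≤ R` centered
within `β r` of the origin. -/
def AEv (d : ℕ) (β K R : ℤ) : Set ((Fin d → ℤ) → ℤ) :=
  {f | ∃ c r, 1 ≤ r ∧ r ≤ R ∧ (∀ i, |c i| ≤ β * r) ∧ ∀ u ∈ box c r, K < |f u|}

lemma measurableSet_AEv (β K R : ℤ) : MeasurableSet (AEv d β K R) := by
  have : AEv d β K R = ⋃ (c : Fin d → ℤ), ⋃ (r : ℤ),
      ⋃ (_ : 1 ≤ r ∧ r ≤ R ∧ ∀ i, |c i| ≤ β * r),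
      ⋂ (u ∈ (box c r : Finset (Fin d → ℤ))), bigSet d K u := by
    ext f
    simp only [AEv, bigSet, Set.mem_setOf_eq, Set.mem_iUnion, Set.mem_iInter]
    constructor
    · rintro ⟨c, r, h1, h2, h3, h4⟩
      exact ⟨c, r, ⟨h1, h2, h3⟩, h4⟩
    · rintro ⟨c, r, ⟨h1, h2, h3⟩, h4⟩
      exact ⟨c, r, h1, h2, h3, h4⟩
  rw [this]
  apply MeasurableSet.iUnion
  intro c
  apply MeasurableSet.iUnion
  intro r
  apply MeasurableSet.iUnion
  intro _
  exact MeasurableSet.biInter (Set.to_countable _) (fun u _ => measurableSet_bigSet K u)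

/-- The shift map on fields. -/
def shiftMap (w : Fin d → ℤ) : ((Fin d → ℤ) → ℤ) → ((Fin d → ℤ) → ℤ) :=
  fun f v => f (v + w)

lemma measurable_shiftMap (w : Fin d → ℤ) : Measurable (shiftMap (d := d) w) :=
  measurable_pi_lambda _ (fun v => measurable_pi_apply (v + w))

end Measures


section Main

variable (mu : Measure ((Fin d → ℤ) → ℤ)) [IsProbabilityMeasure mu]
variable (L : AddSubgroup (Fin d → ℤ)) (M : ℤ)

/-- Sum of the probabilities of large values over a fundamental domain. -/
def qBound (K : ℕ) : ℝ≥0∞ := ∑ s ∈ box (0 : Fin d → ℤ) M, mu (bigSet d (K : ℤ) s)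

variable (hinv : ∀ w ∈ L, mu.map (fun f (v : Fin d → ℤ) => f (v + w)) = mu)
variable (hM : 1 ≤ M) (hML : ∀ w : Fin d → ℤ, (∀ i, M ∣ w i) → w ∈ L)

include hinv in
lemma meas_shift_preimage {w : Fin d → ℤ} (hw : w ∈ L) {A : Set ((Fin d → ℤ) → ℤ)}
    (hA : MeasurableSet A) : mu (shiftMap w ⁻¹' A) = mu A := by
  calc mu (shiftMap w ⁻¹' A) = (mu.map (shiftMap w)) A :=
        (Measure.map_apply (measurable_shiftMap w) hA).symm
    _ = mu A := by
        rw [show shiftMap (d := d) w = (fun f (v : Fin d → ℤ) => f (v + w)) from rfl,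
          hinv w hw]

include hinv hM hML in
lemma bigSet_le_qBound (u : Fin d → ℤ) (K : ℕ) :
    mu (bigSet d (K : ℤ) u) ≤ qBound mu M K := by
  set s : Fin d → ℤ := fun i => u i % M with hs
  have hMne : M ≠ 0 := by omega
  have hwL : u - s ∈ L := by
    apply hML
    intro i
    have : u i - u i % M = M * (u i / M) := by
      rw [Int.emod_def]; ring
    exact ⟨u i / M, by simpa [hs] using this⟩
  have hpre : shiftMap (u - s) ⁻¹' (bigSet d (K : ℤ) s) = bigSet d (K : ℤ) u := by
    ext f
    simp only [Set.mem_preimage, bigSet, Set.mem_setOf_eq, shiftMap]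
    rw [show s + (u - s) = u by ring]
  have heq : mu (bigSet d (K : ℤ) u) = mu (bigSet d (K : ℤ) s) := by
    rw [← hpre, meas_shift_preimage mu L hinv hwL (measurableSet_bigSet _ _)]
  rw [heq]
  apply Finset.single_le_sum (f := fun t => mu (bigSet d (K : ℤ) t))
    (fun t _ => zero_le)
  rw [mem_box]
  intro i
  have h1 : 0 ≤ u i % M := Int.emod_nonneg _ hMne
  have h2 : u i % M < M := Int.emod_lt_of_pos _ (by omega)
  simp only [hs, Pi.zero_apply, sub_zero]
  rw [abs_of_nonneg h1]
  omega

include hinv hM hML in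
/-- The key covering estimate: the probability of a near-origin all-large box is
controlled by the probability of a large value at a single site. -/
lemma measure_AEv_le (β : ℤ) (hβ : 1 ≤ β) (K : ℕ) (R : ℤ) (hR : 1 ≤ R) :
    mu (AEv d β (K : ℤ) R) ≤
      (((2 * β + 5).toNat ^ d * (M + 1).toNat ^ d : ℕ) : ℝ≥0∞) * qBound mu M K := by
  have hMne : M ≠ 0 := by omega
  set m : ℤ := (β + 1) * R with hm
  have hm1 : 1 ≤ m := by nlinarith
  set P : ℤ := M * m + (β + 1) * R with hP
  set C2 : ℕ := (2 * β + 5).toNat ^ d with hC2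
  set boxZ : Finset (Fin d → ℤ) := box (0 : Fin d → ℤ) m with hboxZ
  set boxP : Finset (Fin d → ℤ) := box (0 : Fin d → ℤ) P with hboxP
  set A : Set ((Fin d → ℤ) → ℤ) := AEv d β (K : ℤ) R with hA
  have hAmeas := measurableSet_AEv (d := d) β (K : ℤ) R
  have hinj : Function.Injective (fun z : Fin d → ℤ => M • z) := by
    intro a b hab
    funext i
    have := congrFun hab i
    simp only [Pi.smul_apply, smul_eq_mul] at this
    exact mul_left_cancel₀ hMne this
  -- pathwise counting
  have hpath : ∀ f : (Fin d → ℤ) → ℤ,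
      ((boxZ.filter (fun z => shiftMap (M • z) f ∈ A)).card : ℕ) ≤
        C2 * ((boxP.filter (fun u => (K : ℤ) < |f u|)).card : ℕ) := by
    intro f
    set F0 : Finset (Fin d → ℤ) := boxZ.filter (fun z => shiftMap (M • z) f ∈ A) with hF0
    set G : Finset (Fin d → ℤ) := boxP.filter (fun u => (K : ℤ) < |f u|) with hG
    have hcard : F0.card = (F0.image (fun z => M • z)).card :=
      (Finset.card_image_of_injective _ hinj).symm
    rw [hcard]
    apply vitali_count β hβ
    intro w hw
    obtain ⟨z, hz, rfl⟩ := Finset.mem_image.mp hw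
    obtain ⟨hzbox, hzA⟩ := Finset.mem_filter.mp hz
    obtain ⟨c', r, hr1, hrR, hc', hbig⟩ := hzA
    refine ⟨c' + M • z, r, hr1, ?_, ?_⟩
    · intro i
      have : (M • z) i - (c' + M • z) i = -(c' i) := by
        simp only [Pi.add_apply, Pi.smul_apply, smul_eq_mul]; ring
      rw [this, abs_neg]
      exact hc' i
    · intro u hu
      have hub := mem_box.mp hu
      have humem : u - M • z ∈ box c' r := by
        rw [mem_box]
        intro i
        have := hub i
        simp only [Pi.sub_apply, Pi.add_apply, Pi.smul_apply, smul_eq_mul] at this ⊢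
        have e : u i - M * z i - c' i = u i - (c' i + M * z i) := by ring
        rw [e]
        exact this
      have hval := hbig _ humem
      have hval' : (K : ℤ) < |f u| := by
        have : (u - M • z) + M • z = u := by ring
        simpa [shiftMap, this] using hval
      rw [hG, Finset.mem_filter]
      refine ⟨?_, hval'⟩
      rw [hboxP, mem_box]
      intro i
      have h1 := hub i
      have h2 := hc' i
      have h3 := (mem_box.mp hzbox) i
      simp only [Pi.zero_apply, sub_zero, Pi.add_apply, Pi.smul_apply, smul_eq_mul] at h1 h2 h3 ⊢
      have habs : |u i| ≤ |u i - (c' i + M * z i)| + |c' i| + |M * z i| := by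
        have e : u i = (u i - (c' i + M * z i)) + c' i + M * z i := by ring
        calc |u i| = |(u i - (c' i + M * z i)) + c' i + M * z i| := by rw [← e]
          _ ≤ |(u i - (c' i + M * z i)) + c' i| + |M * z i| := abs_add_le _ _
          _ ≤ |u i - (c' i + M * z i)| + |c' i| + |M * z i| := by
              have := abs_add_le (u i - (c' i + M * z i)) (c' i)
              omega
      have hMz : |M * z i| ≤ M * m := by
        rw [abs_mul, abs_of_pos (by omega : (0:ℤ) < M)]
        apply mul_le_mul_of_nonneg_left _ (by omega)
        exact h3
      have hβr : β * r ≤ β * R := mul_le_mul_of_nonneg_left hrR (by omega)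
      have hee : (β + 1) * R = β * R + R := by ring
      rw [hP]
      omega
  -- measure computation
  set X : ℕ := (2 * m + 1).toNat ^ d with hX
  have hboxZcard : boxZ.card = X := by rw [hboxZ, card_box]
  have hXpos : 0 < X := by
    apply Nat.pow_pos
    omega
  have key : (X : ℝ≥0∞) * mu A ≤
      (C2 : ℝ≥0∞) * ((boxP.card : ℝ≥0∞) * qBound mu M K) := by
    have hz2 : ∀ z ∈ boxZ, mu (shiftMap (M • z) ⁻¹' A) = mu A := by
      intro z _
      apply meas_shift_preimage mu L hinv _ hAmeas
      apply hML
      intro i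
      exact ⟨z i, by simp⟩
    calc (X : ℝ≥0∞) * mu A = ∑ _z ∈ boxZ, mu A := by
          rw [Finset.sum_const, hboxZcard, nsmul_eq_mul]
      _ = ∑ z ∈ boxZ, mu (shiftMap (M • z) ⁻¹' A) :=
          (Finset.sum_congr rfl hz2).symm
      _ = ∑ z ∈ boxZ, ∫⁻ f, (shiftMap (M • z) ⁻¹' A).indicator 1 f ∂mu := by
          apply Finset.sum_congr rfl
          intro z _
          rw [lintegral_indicator_one ((measurable_shiftMap _) hAmeas)]
      _ = ∫⁻ f, ∑ z ∈ boxZ, (shiftMap (M • z) ⁻¹' A).indicator 1 f ∂mu :=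
          (lintegral_finset_sum _ (fun z _ =>
            (measurable_const.indicator ((measurable_shiftMap _) hAmeas)))).symm
      _ ≤ ∫⁻ f, (C2 : ℝ≥0∞) * ∑ u ∈ boxP, (bigSet d (K : ℤ) u).indicator 1 f ∂mu := by
          apply lintegral_mono
          intro f
          dsimp only
          have e1 : ∑ z ∈ boxZ, (shiftMap (M • z) ⁻¹' A).indicator
              (1 : ((Fin d → ℤ) → ℤ) → ℝ≥0∞) f
              = ((boxZ.filter (fun z => shiftMap (M • z) f ∈ A)).card : ℝ≥0∞) := by
            rw [← Finset.sum_boole]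
            apply Finset.sum_congr rfl
            intro z _
            by_cases h : shiftMap (M • z) f ∈ A <;>
              simp [Set.indicator_apply, Set.mem_preimage, h]
          have e2 : ∑ u ∈ boxP, (bigSet d (K : ℤ) u).indicator
              (1 : ((Fin d → ℤ) → ℤ) → ℝ≥0∞) f
              = ((boxP.filter (fun u => (K : ℤ) < |f u|)).card : ℝ≥0∞) := by
            rw [← Finset.sum_boole]
            apply Finset.sum_congr rfl
            intro u _
            by_cases h : (K : ℤ) < |f u| <;>
              simp [Set.indicator_apply, bigSet, h]
          rw [e1, e2]
          calc ((boxZ.filter (fun z => shiftMap (M • z) f ∈ A)).card : ℝ≥0∞)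
              ≤ ((C2 * (boxP.filter (fun u => (K : ℤ) < |f u|)).card : ℕ) : ℝ≥0∞) := by
                exact_mod_cast hpath f
            _ = (C2 : ℝ≥0∞) * ((boxP.filter (fun u => (K : ℤ) < |f u|)).card : ℝ≥0∞) := by
                push_cast; ring
      _ = (C2 : ℝ≥0∞) * ∑ u ∈ boxP, mu (bigSet d (K : ℤ) u) := by
          have hmeas : ∀ u ∈ boxP, Measurable
              ((bigSet d (K : ℤ) u).indicator (1 : ((Fin d → ℤ) → ℤ) → ℝ≥0∞)) :=
            fun u _ => measurable_one.indicator (measurableSet_bigSet _ _)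
          have hmeas_sum : Measurable (fun f => ∑ u ∈ boxP,
              (bigSet d (K : ℤ) u).indicator (1 : ((Fin d → ℤ) → ℤ) → ℝ≥0∞) f) :=
            Finset.measurable_sum _ hmeas
          rw [lintegral_const_mul _ hmeas_sum]
          congr 1
          rw [lintegral_finset_sum _ hmeas]
          apply Finset.sum_congr rfl
          intro u _
          rw [lintegral_indicator_one (measurableSet_bigSet _ _)]
      _ ≤ (C2 : ℝ≥0∞) * ((boxP.card : ℝ≥0∞) * qBound mu M K) := by
          apply mul_le_mul_right
          calc ∑ u ∈ boxP, mu (bigSet d (K : ℤ) u)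
              ≤ ∑ _u ∈ boxP, qBound mu M K :=
                Finset.sum_le_sum (fun u _ => bigSet_le_qBound mu L M hinv hM hML u K)
            _ = (boxP.card : ℝ≥0∞) * qBound mu M K := by
                rw [Finset.sum_const, nsmul_eq_mul]
  -- compare cardinalities and cancel
  have hboxPcard : boxP.card ≤ (M + 1).toNat ^ d * X := by
    rw [hboxP, card_box, hX, ← Nat.mul_pow]
    apply Nat.pow_le_pow_left
    have h1 : 2 * P + 1 ≤ (M + 1) * (2 * m + 1) := by
      rw [hP, hm]
      nlinarith
    calc (2 * P + 1).toNat ≤ ((M + 1) * (2 * m + 1)).toNat := Int.toNat_le_toNat h1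
      _ = (M + 1).toNat * (2 * m + 1).toNat := toNat_mul_of_nonneg (by omega) (by omega)
  have hfinal : mu A * (X : ℝ≥0∞) ≤
      ((C2 * (M + 1).toNat ^ d : ℕ) : ℝ≥0∞) * qBound mu M K * (X : ℝ≥0∞) := by
    calc mu A * (X : ℝ≥0∞) = (X : ℝ≥0∞) * mu A := mul_comm _ _
      _ ≤ (C2 : ℝ≥0∞) * ((boxP.card : ℝ≥0∞) * qBound mu M K) := key
      _ ≤ (C2 : ℝ≥0∞) * ((((M + 1).toNat ^ d * X : ℕ) : ℝ≥0∞) * qBound mu M K) := by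
          apply mul_le_mul_right
          apply mul_le_mul_left
          exact_mod_cast hboxPcard
      _ = ((C2 * (M + 1).toNat ^ d : ℕ) : ℝ≥0∞) * qBound mu M K * (X : ℝ≥0∞) := by
          push_cast; ring
  have hX0 : (X : ℝ≥0∞) ≠ 0 := by
    simp only [ne_eq, Nat.cast_eq_zero]
    omega
  have hXtop : (X : ℝ≥0∞) ≠ ⊤ := ENNReal.natCast_ne_top X
  have := (ENNReal.mul_le_mul_iff_left hX0 hXtop).mp hfinal
  calc mu A ≤ ((C2 * (M + 1).toNat ^ d : ℕ) : ℝ≥0∞) * qBound mu M K := this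
    _ = (((2 * β + 5).toNat ^ d * (M + 1).toNat ^ d : ℕ) : ℝ≥0∞) * qBound mu M K := by
        rw [hC2]


lemma qBound_tendsto_zero : Tendsto (fun K : ℕ => qBound mu M K) atTop (nhds 0) := by
  have hterm : ∀ s ∈ box (0 : Fin d → ℤ) M,
      Tendsto (fun K : ℕ => mu (bigSet d (K : ℤ) s)) atTop (nhds 0) := by
    intro s _
    have hmeas : ∀ K : ℕ, NullMeasurableSet (bigSet d (K : ℤ) s) mu :=
      fun K => (measurableSet_bigSet _ _).nullMeasurableSet
    have hanti : Antitone (fun K : ℕ => bigSet d (K : ℤ) s) := by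
      intro a b hab f hf
      simp only [bigSet, Set.mem_setOf_eq] at hf ⊢
      have : (a : ℤ) ≤ (b : ℤ) := by exact_mod_cast hab
      omega
    have hfin : ∃ K : ℕ, mu (bigSet d (K : ℤ) s) ≠ ⊤ :=
      ⟨0, measure_ne_top mu _⟩
    have hint : ⋂ K : ℕ, bigSet d (K : ℤ) s = ∅ := by
      ext f
      simp only [Set.mem_iInter, bigSet, Set.mem_setOf_eq, Set.mem_empty_iff_false,
        iff_false, not_forall, not_lt]
      exact ⟨(|f s|).toNat, by omega⟩
    have := tendsto_measure_iInter_atTop hmeas hanti hfin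
    rw [hint] at this
    simpa [Function.comp_def] using this
  have := tendsto_finset_sum (box (0 : Fin d → ℤ) M) hterm
  simpa [qBound] using this

end Main

/-- The set of height functions with linearly large values at arbitrarily large sites. -/
def BadSet (d k : ℕ) : Set ((Fin d → ℤ) → ℤ) :=
  {f | ∀ N : ℕ, ∃ v : Fin d → ℤ, (N : ℤ) ≤ norm1 v ∧ norm1 v < (k : ℤ) * |f v|}

lemma AEv_mono {β K R R' : ℤ} (h : R ≤ R') : AEv d β K R ⊆ AEv d β K R' := by
  rintro f ⟨c, r, h1, h2, h3, h4⟩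
  exact ⟨c, r, h1, le_trans h2 h, h3, h4⟩

lemma badSet_subset_union (hd : 1 ≤ d) {k : ℕ} (hk : 1 ≤ k) (K : ℕ)
    {f : (Fin d → ℤ) → ℤ} (hf : IsHHF f) (hbad : f ∈ BadSet d k) :
    f ∈ ⋃ (R : ℕ), AEv d (16 * d * k : ℤ) (K : ℤ) (R : ℤ) := by
  have hlip := lipschitz' hf.1
  obtain ⟨v, hv1, hv2⟩ := hbad (16 * d * k + 8 * k * (K + 1))
  obtain ⟨h, h1, h2, h3⟩ := bad_gives_box hd hk K hlip v hv1 hv2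
  refine Set.mem_iUnion.mpr ⟨h.toNat, v, h, h1, ?_, ?_, h3⟩
  · omega
  · intro i
    have := h2 i
    push_cast at this ⊢
    linarith

section MainTwo

variable (mu : Measure ((Fin d → ℤ) → ℤ)) [IsProbabilityMeasure mu]
variable (L : AddSubgroup (Fin d → ℤ)) (M : ℤ)
variable (hinv : ∀ w ∈ L, mu.map (fun f (v : Fin d → ℤ) => f (v + w)) = mu)
variable (hM : 1 ≤ M) (hML : ∀ w : Fin d → ℤ, (∀ i, M ∣ w i) → w ∈ L)

include hinv hM hML in
lemma measure_badSet_zero (hd : 1 ≤ d) {k : ℕ} (hk : 1 ≤ k)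
    (hhhf : ∀ᵐ f ∂mu, IsHHF f) : mu (BadSet d k) = 0 := by
  set β : ℤ := (16 * d * k : ℤ) with hβdef
  have hβ : 1 ≤ β := by
    have : (1:ℤ) ≤ (d:ℤ) := by exact_mod_cast hd
    have : (1:ℤ) ≤ (k:ℤ) := by exact_mod_cast hk
    nlinarith [show (1:ℤ) ≤ (d:ℤ) from by exact_mod_cast hd]
  set C : ℕ := (2 * β + 5).toNat ^ d * (M + 1).toNat ^ d with hC
  have hbound : ∀ K : ℕ, mu (BadSet d k) ≤ (C : ℝ≥0∞) * qBound mu M K := by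
    intro K
    have hsub : ∀ᵐ f ∂mu, f ∈ BadSet d k →
        f ∈ ⋃ (R : ℕ), AEv d β (K : ℤ) (R : ℤ) := by
      filter_upwards [hhhf] with f hf hbad
      exact badSet_subset_union hd hk K hf hbad
    have hmono : mu (BadSet d k) ≤ mu (⋃ (R : ℕ), AEv d β (K : ℤ) (R : ℤ)) := by
      apply measure_mono_ae
      exact hsub
    have hdir : Directed (· ⊆ ·) (fun R : ℕ => AEv d β (K : ℤ) (R : ℤ)) := by
      apply Monotone.directed_le
      intro a b hab
      exact AEv_mono (by exact_mod_cast hab)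
    rw [hdir.measure_iUnion] at hmono
    refine le_trans hmono (iSup_le fun R => ?_)
    calc mu (AEv d β (K : ℤ) (R : ℤ))
        ≤ mu (AEv d β (K : ℤ) ((R : ℤ) + 1)) :=
          measure_mono (AEv_mono (by omega))
      _ ≤ (C : ℝ≥0∞) * qBound mu M K :=
          measure_AEv_le mu L M hinv hM hML β hβ K ((R : ℤ) + 1) (by omega)
  have htendsto : Tendsto (fun K : ℕ => (C : ℝ≥0∞) * qBound mu M K) atTop (nhds 0) := by
    have := ENNReal.Tendsto.const_mul (qBound_tendsto_zero mu M)
      (Or.inr (ENNReal.natCast_ne_top C))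
    simpa using this
  have := ge_of_tendsto htendsto (Eventually.of_forall hbound)
  simpa using this

end MainTwo

end Stmt14Aux

theorem stmt14 {d : ℕ} (μ : Measure ((Fin d → ℤ) → ℤ)) [IsProbabilityMeasure μ]
    (hhhf : ∀ᵐ f ∂μ, IsHHF f)
    (L : AddSubgroup (Fin d → ℤ))
    (hfull : ∀ i : Fin d, ∃ n : ℤ, n ≠ 0 ∧ (n • Pi.single i (1 : ℤ) : Fin d → ℤ) ∈ L)
    (hinv : ∀ w ∈ L, μ.map (fun f (v : Fin d → ℤ) => f (v + w)) = μ) :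
    ∀ᵐ f ∂μ, ∀ ε : ℝ, 0 < ε → ∃ N : ℕ, ∀ v : Fin d → ℤ,
      (N : ℤ) ≤ norm1 v → ((|f v| : ℤ) : ℝ) ≤ ε * ((norm1 v : ℤ) : ℝ) := by
  open Stmt14Aux in
  rcases Nat.eq_zero_or_pos d with hd0 | hd
  · subst hd0
    refine Filter.Eventually.of_forall ?_
    intro f ε hε
    refine ⟨1, fun v hv => ?_⟩
    exfalso
    have : norm1 v = 0 := by
      unfold norm1
      simp
    rw [this] at hv
    norm_num at hv
  · -- build M
    choose nn hnn0 hnnL using hfull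
    set M : ℤ := ∏ i, |nn i| with hMdef
    have hMpos : 0 < M := Finset.prod_pos (fun i _ => abs_pos.mpr (hnn0 i))
    have hM : 1 ≤ M := hMpos
    have hdvdM : ∀ i, nn i ∣ M := by
      intro i
      have h1 : |nn i| ∣ M := Finset.dvd_prod_of_mem (fun j => |nn j|) (Finset.mem_univ i)
      exact (abs_dvd _ _).mp h1
    have hML : ∀ w : Fin d → ℤ, (∀ i, M ∣ w i) → w ∈ L := by
      intro w hw
      have hrepr : w = ∑ i, ((w i / M) * (M / nn i)) • (nn i • Pi.single i (1:ℤ)) := by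
        funext j
        symm
        rw [Finset.sum_apply]
        rw [Finset.sum_eq_single j]
        · simp only [Pi.smul_apply, smul_eq_mul, Pi.single_eq_same]
          have e1 : M / nn j * nn j = M := Int.ediv_mul_cancel (hdvdM j)
          have e2 : w j / M * M = w j := Int.ediv_mul_cancel (hw j)
          calc w j / M * (M / nn j) * (nn j * 1) = w j / M * (M / nn j * nn j) := by ring
            _ = w j / M * M := by rw [e1]
            _ = w j := e2
        · intro i _ hij
          simp [Pi.single_apply, Ne.symm hij]
        · intro h
          exact absurd (Finset.mem_univ j) h
      rw [hrepr]
      apply AddSubgroup.sum_mem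
      intro i _
      exact AddSubgroup.zsmul_mem L (hnnL i) _
    have hbadzero : ∀ k : ℕ, μ (BadSet d (k + 1)) = 0 := by
      intro k
      exact measure_badSet_zero μ L M hinv hM hML hd (by omega) hhhf
    have hae : ∀ᵐ f ∂μ, ∀ k : ℕ, f ∉ BadSet d (k + 1) := by
      rw [ae_all_iff]
      intro k
      exact (measure_eq_zero_iff_ae_notMem).mp (hbadzero k)
    filter_upwards [hae] with f hf
    intro ε hε
    obtain ⟨k, hk⟩ := exists_nat_gt (1 / ε)
    have hfk := hf k
    simp only [BadSet, Set.mem_setOf_eq, not_forall] at hfk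
    obtain ⟨N, hN⟩ := hfk
    push_neg at hN
    refine ⟨N, fun v hv => ?_⟩
    have hNv := hN v hv
    -- hNv : ((k+1) : ℤ) * |f v| ≤ norm1 v
    have hcast : ((k : ℝ) + 1) * ((|f v| : ℤ) : ℝ) ≤ ((norm1 v : ℤ) : ℝ) := by
      exact_mod_cast hNv
    have hfv0 : (0 : ℝ) ≤ ((|f v| : ℤ) : ℝ) := by
      exact_mod_cast abs_nonneg (f v)
    have hn0 : (0 : ℝ) ≤ ((norm1 v : ℤ) : ℝ) := by
      exact_mod_cast norm1_nonneg v
    have hεk : 1 < ε * k := by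
      rw [div_lt_iff₀ hε] at hk
      linarith [mul_comm ε (k:ℝ)]
    nlinarith [mul_nonneg (le_of_lt hε) hn0]
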